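/- If two mutation-directions are non-adjacent then their mutations commute: if B is an n×n skew-symmetrizable integer matrix with b_ij = 0 (equivalently b_ji = 0) for distinct indices i, j, then μ_i(μ_j(B)) = μ_j(μ_i(B)). -/
import Mathlib

/-- Matrix mutation in direction `k` for an integer matrix. -/
def mutate {n : ℕ} (B : Matrix (Fin n) (Fin n) ℤ) (k : Fin n) : Matrix (Fin n) (Fin n) ℤ :=
  fun i j => if i = k ∨ j = k then -B i j
    else B i j + (|B i k| * B k j + B i k * |B k j|) / 2

/-- If `b_ij = 0` for distinct `i`, `j`, then mutations in directions `i` and `j` commute. -/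
theorem mutations_commute {n : ℕ} (B : Matrix (Fin n) (Fin n) ℤ)
    (D : Fin n → ℤ) (hD : ∀ i, 0 < D i)
    (hskew : ∀ i j, B i j * D j = -(B j i * D i))
    (i j : Fin n) (hij : i ≠ j) (hzero : B i j = 0) :
    mutate (mutate B j) i = mutate (mutate B i) j := by
  have hji : B j i = 0 := by
    have h := hskew j i
    rw [hzero, zero_mul, neg_zero] at h
    rcases mul_eq_zero.mp h with h' | h'
    · exact h'
    · exact absurd h' (hD i).ne'
  have hji2 : j ≠ i := Ne.symm hij
  funext k l
  simp only [mutate]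
  by_cases hki : k = i <;> by_cases hli : l = i <;> by_cases hkj : k = j <;>
    by_cases hlj : l = j <;>
    simp_all [abs_neg] <;> ring
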